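/- arXiv:2403.20161 — 4 statements merged into one kernel-verified Lean document; each statement's English description precedes it below -/
import Mathlib

section
/- If G is a resource contribution game with independent objectives, then the three notions of Nash equilibrium coincide: NE^ct(G) = NE^ca(G) = NE^pca(G). -/
open scoped Classical

/-- A resource contribution game over atomic resource type `Res` with player set `ι`:
each player has a goal (a resource bundle, i.e. a multiset of atomic resources) and
an endowment (a resource bag, i.e. a multiset of resource bundles). -/
structure RCG (Res ι : Type*) where
  goal : ι → Multiset Res
  endow : ι → Multiset (Multiset Res)

namespace RCG

variable {Res ι : Type*} [Fintype ι]

/-- A profile assigns to each player a bag (his contribution). -/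
abbrev Profile (Res ι : Type*) := ι → Multiset (Multiset Res)

/-- Outcome of a profile: the multiset sum of all contributions. -/
def out (P : Profile Res ι) : Multiset (Multiset Res) := ∑ i, P i

/-- The bag `X` can be transformed into the bundle `B`: `♭(B) ⊆ ♭•(X)`. -/
def Trans (X : Multiset (Multiset Res)) (B : Multiset Res) : Prop := B ≤ X.sum

/-- Player `i` is potentially satisfied by profile `P`. -/
def Psat (G : RCG Res ι) (P : Profile Res ι) (i : ι) : Prop :=
  Trans (out P) (G.goal i)

/-- The set of players potentially satisfied by `P`. -/
noncomputable def psatPlayers (G : RCG Res ι) (P : Profile Res ι) : Finset ι :=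
  Finset.univ.filter fun i => Psat G P i

/-- The profile `P` is contentious. -/
def Contentious (G : RCG Res ι) (P : Profile Res ι) : Prop :=
  ¬ Trans (out P) (∑ j ∈ psatPlayers G P, G.goal j)

/-- Restriction of bundle `B` to the resource types occurring in `C`. -/
noncomputable def restr (B C : Multiset Res) : Multiset Res := B.filter (· ∈ C)

/-- The profile `P` is contentious for player `i`. -/
def ContentiousFor (G : RCG Res ι) (P : Profile Res ι) (i : ι) : Prop :=
  Psat G P i ∧ ¬ Trans (out P) (∑ j ∈ psatPlayers G P, restr (G.goal j) (G.goal i))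

/-- The three kinds of preferences: contention-tolerant, (public) contention-averse,
private contention-averse. -/
inductive Pref | ct | ca | pca

/-- `P` is a good profile for player `i` according to preference kind `pref`. -/
def Good (pref : Pref) (G : RCG Res ι) (P : Profile Res ι) (i : ι) : Prop :=
  match pref with
  | .ct => Psat G P i
  | .ca => Psat G P i ∧ ¬ Contentious G P
  | .pca => Psat G P i ∧ ¬ ContentiousFor G P i

/-- Player `i` strictly prefers `P` over `Q` (i.e. `Q ≺^pref_i P`). -/
def Prefers (pref : Pref) (G : RCG Res ι) (i : ι) (Q P : Profile Res ι) : Prop :=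
  (¬ Good pref G P i ∧ ¬ Good pref G Q i ∧ P i < Q i) ∨
  (Good pref G P i ∧ ¬ Good pref G Q i) ∨
  (Good pref G P i ∧ Good pref G Q i ∧ P i < Q i)

/-- `C` is a profitable deviation for player `i` from profile `P`. -/
noncomputable def ProfDev (pref : Pref) (G : RCG Res ι) (P : Profile Res ι) (i : ι)
    (C : Multiset (Multiset Res)) : Prop :=
  C ≤ G.endow i ∧ Prefers pref G i P (Function.update P i C)

/-- `P` is a pure Nash equilibrium of `G` according to `pref`:
`P` is a profile of `G` and no player has a profitable deviation. -/
noncomputable def NE (pref : Pref) (G : RCG Res ι) (P : Profile Res ι) : Prop :=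
  (∀ i, P i ≤ G.endow i) ∧ ∀ i C, ¬ ProfDev pref G P i C

/-- `G` is an RCG with endowments as bags of atomic resources. -/
def IsRCGBAR (G : RCG Res ι) : Prop :=
  ∀ i, ∀ B ∈ G.endow i, ∃ r : Res, B = {r}

/-- `G` has independent objectives. -/
def IndepObjectives (G : RCG Res ι) : Prop :=
  ∀ i j : ι, i ≠ j → ∀ r : Res, r ∈ G.goal i → r ∉ G.goal j

end RCG

/-! With independent objectives the goals of distinct players are disjoint multisets, so the sum
of the goals of any set of players is their union. Hence whenever each of those goals (or each of
their restrictions to a fixed goal) can be obtained from the outcome, so can their sum: no profile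
is contentious, publicly or for any player. The three notions of a good profile then all reduce to
potential satisfaction, and the preferences and equilibria built from them coincide. -/

theorem Multiset.finsetSum_le_of_pairwise_disjoint {α β : Type*} {s : Finset β}
    {f : β → Multiset α} {m : Multiset α}
    (hdisj : ∀ x ∈ s, ∀ y ∈ s, x ≠ y → Disjoint (f x) (f y)) (hle : ∀ x ∈ s, f x ≤ m) :
    ∑ x ∈ s, f x ≤ m := by
  classical
  rw [Multiset.finsetSum_eq_sup_iff_disjoint.mpr hdisj]
  exact Finset.sup_le hle

namespace RCG

variable {Res ι : Type*} {G : RCG Res ι}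

theorem IndepObjectives.disjoint_goal (hind : G.IndepObjectives) {i j : ι} (hij : i ≠ j) :
    Disjoint (G.goal i) (G.goal j) :=
  Multiset.disjoint_left.mpr (hind i j hij _)

variable [Fintype ι]

theorem IndepObjectives.not_contentious (hind : G.IndepObjectives) (P : Profile Res ι) :
    ¬ G.Contentious P :=
  not_not_intro <| Multiset.finsetSum_le_of_pairwise_disjoint
    (fun _ _ _ _ hjk => hind.disjoint_goal hjk)
    (fun _ hj => (Finset.mem_filter.mp hj).2)

theorem IndepObjectives.not_contentiousFor (hind : G.IndepObjectives) (P : Profile Res ι)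
    (i : ι) : ¬ G.ContentiousFor P i := by
  refine fun ⟨_, hcont⟩ => hcont <| Multiset.finsetSum_le_of_pairwise_disjoint
    (fun _ _ _ _ hjk => ?_) (fun _ hj => ?_)
  · exact (hind.disjoint_goal hjk).mono (Multiset.filter_le _ _) (Multiset.filter_le _ _)
  · exact (Multiset.filter_le _ _).trans (Finset.mem_filter.mp hj).2

theorem IndepObjectives.good_iff_psat (hind : G.IndepObjectives) (pref : Pref)
    (P : Profile Res ι) (i : ι) : Good pref G P i ↔ G.Psat P i := by
  cases pref with
  | ct => rfl
  | ca => exact and_iff_left (hind.not_contentious P)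
  | pca => exact and_iff_left (hind.not_contentiousFor P i)

theorem NE_iff_of_good_iff {p q : Pref} (hgood : ∀ P i, Good p G P i ↔ Good q G P i)
    (P : Profile Res ι) : NE p G P ↔ NE q G P := by
  simp only [NE, ProfDev, Prefers, hgood]

end RCG

/-- with independent objectives the three notions of Nash equilibrium
coincide: `NE^ct(G) = NE^ca(G) = NE^pca(G)`. -/
theorem indep_NE_coincide {Res ι : Type*} [Fintype ι]
    (G : RCG Res ι) (hind : RCG.IndepObjectives G) :
    ∀ P : RCG.Profile Res ι,
      (RCG.NE .ct G P ↔ RCG.NE .ca G P) ∧ (RCG.NE .ca G P ↔ RCG.NE .pca G P) := by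
  have hgood (p q : RCG.Pref) (P : RCG.Profile Res ι) (i : ι) :
      RCG.Good p G P i ↔ RCG.Good q G P i :=
    (hind.good_iff_psat p P i).trans (hind.good_iff_psat q P i).symm
  exact fun P => ⟨RCG.NE_iff_of_good_iff (hgood _ _) P, RCG.NE_iff_of_good_iff (hgood _ _) P⟩
end

section
/- For every kind of preferences pref ∈ {ct, ca, pca}, there exists a resource contribution game with independent objectives G such that NE^pref(G) = ∅. Concretely, for distinct atomic resources A, B, C, the three-player RCG with ε_1 = {A·B}, ε_2 = {B·C}, ε_3 = {A·C}, γ_1 = A, γ_2 = B, γ_3 = C has independent objectives and satisfies NE^ct(G) = NE^ca(G) = NE^pca(G) = ∅. -/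
open scoped Classical

/-!
Each goal is a single resource and the three resources are distinct, so no profile is ever
contentious (in either sense), and for all three kinds of preferences a player is happy exactly
when his resource is contributed. Resource `A` is held by players 1 and 3, `B` by 1 and 2, `C` by
2 and 3: every player shares his goal with exactly one predecessor on the cycle 1 → 2 → 3 → 1.
At an equilibrium a player contributes if and only if his predecessor does not (he would
otherwise withdraw, resp. join in), and such an alternation cannot close up around a cycle of
odd length.
-/

namespace RCG

open Function

variable {Res ι : Type*}

theorem indepObjectives_of_goal_eq_singleton {G : RCG Res ι} {r : ι → Res} (hr : Injective r)
    (hg : ∀ i, G.goal i = {r i}) : IndepObjectives G := by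
  intro i j hij x hxi hxj
  rw [hg, Multiset.mem_singleton] at hxi hxj
  exact hij (hr (hxi.symm.trans hxj))

variable [Fintype ι]

theorem out_update (P : Profile Res ι) (i : ι) (C : Multiset (Multiset Res)) :
    out (update P i C) = C + out (update P i 0) := by
  simp [out, Finset.sum_update_of_mem]

theorem out_eq_add (P : Profile Res ι) (i : ι) : out P = P i + out (update P i 0) := by
  conv_lhs => rw [← update_eq_self i P]
  exact out_update P i (P i)

theorem ContentiousFor.contentious {G : RCG Res ι} {P : Profile Res ι} {i : ι}
    (h : ContentiousFor G P i) : Contentious G P :=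
  fun hc => h.2 <| le_trans (Finset.sum_le_sum fun _ _ => Multiset.filter_le _ _) hc

section NashEquilibrium

variable {pref : Pref} {G : RCG Res ι} {P : Profile Res ι} {i : ι}

theorem NE.eq_zero_of_good_update_zero (h : NE pref G P)
    (hgood : Good pref G (update P i 0) i) : P i = 0 := by
  by_contra hne
  refine h.2 i 0 ⟨Multiset.zero_le _, ?_⟩
  by_cases hP : Good pref G P i
  · exact .inr <| .inr ⟨hgood, hP, by simpa [pos_iff_ne_zero] using hne⟩
  · exact .inr <| .inl ⟨hgood, hP⟩

theorem NE.good_of_good_update_endow (h : NE pref G P)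
    (hgood : Good pref G (update P i (G.endow i)) i) : Good pref G P i := by
  by_contra hP
  exact h.2 i _ ⟨le_rfl, .inr <| .inl ⟨hgood, hP⟩⟩

end NashEquilibrium

section SingletonGoals

variable {G : RCG Res ι} {r : ι → Res}

theorem psat_iff_of_goal_eq_singleton (hg : ∀ i, G.goal i = {r i}) {P : Profile Res ι}
    {i : ι} : Psat G P i ↔ r i ∈ (out P).sum := by
  rw [Psat, hg, Trans, Multiset.singleton_le]

theorem not_contentious_of_goal_eq_singleton (hr : Injective r) (hg : ∀ i, G.goal i = {r i})
    (P : Profile Res ι) : ¬ Contentious G P := by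
  intro hc
  apply hc
  have hsum : ∑ j ∈ psatPlayers G P, G.goal j = (psatPlayers G P).val.map r := by
    rw [Finset.sum_congr rfl fun j _ => hg j, Finset.sum_eq_multiset_sum,
      ← Multiset.sum_map_singleton ((psatPlayers G P).val.map r), Multiset.map_map]
    rfl
  rw [Trans, hsum, Multiset.le_iff_subset ((psatPlayers G P).nodup.map hr)]
  intro x hx
  obtain ⟨j, hj, rfl⟩ := Multiset.mem_map.1 hx
  exact (psat_iff_of_goal_eq_singleton hg).1 (Finset.mem_filter.1 hj).2

theorem good_iff_of_goal_eq_singleton (hr : Injective r)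
    (hg : ∀ i, G.goal i = {r i}) {pref : Pref} {P : Profile Res ι} {i : ι} :
    Good pref G P i ↔ r i ∈ (out P).sum := by
  rw [← psat_iff_of_goal_eq_singleton hg]
  have hnc := not_contentious_of_goal_eq_singleton hr hg P
  cases pref with
  | ct => rfl
  | ca => exact and_iff_left hnc
  | pca => exact and_iff_left fun h => hnc h.contentious

theorem NE.ne_zero_iff_not_mem_sum_out_update_zero (hr : Injective r) (hg : ∀ i, G.goal i = {r i})
    {pref : Pref} {P : Profile Res ι} (h : NE pref G P) {i : ι}
    (hself : r i ∈ (G.endow i).sum) : P i ≠ 0 ↔ r i ∉ (out (update P i 0)).sum := by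
  constructor
  · intro hne hmem
    exact hne (h.eq_zero_of_good_update_zero ((good_iff_of_goal_eq_singleton hr hg).2 hmem))
  · intro hnot hzero
    have hjoin : Good pref G (update P i (G.endow i)) i := by
      rw [good_iff_of_goal_eq_singleton hr hg, out_update, Multiset.sum_add]
      exact Multiset.mem_add.2 (.inl hself)
    have hstay := (good_iff_of_goal_eq_singleton hr hg).1 (h.good_of_good_update_endow hjoin)
    rw [out_eq_add P i, hzero, zero_add] at hstay
    exact hnot hstay

end SingletonGoals

end RCG

/-- the three-player game with `ε₁={A·B}, ε₂={B·C}, ε₃={A·C}`,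
`γ₁=A, γ₂=B, γ₃=C` has independent objectives and no Nash equilibrium for any
kind of preferences. -/
theorem indep_game_no_NE {Res : Type*} (A B C : Res)
    (hAB : A ≠ B) (hBC : B ≠ C) (hAC : A ≠ C)
    (G : RCG Res (Fin 3))
    (hgoal : G.goal = ![({A} : Multiset Res), ({B} : Multiset Res), ({C} : Multiset Res)])
    (hendow : G.endow = ![({({A, B} : Multiset Res)} : Multiset (Multiset Res)),
                          ({({B, C} : Multiset Res)} : Multiset (Multiset Res)),
                          ({({A, C} : Multiset Res)} : Multiset (Multiset Res))]) :
    RCG.IndepObjectives G ∧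
      ∀ pref : RCG.Pref, ∀ P : RCG.Profile Res (Fin 3), ¬ RCG.NE pref G P := by
  have hr : Function.Injective ![A, B, C] := by
    intro i j h
    fin_cases i <;> fin_cases j <;> simp_all [eq_comm]
  have hg : ∀ i, G.goal i = {![A, B, C] i} := by
    intro i
    fin_cases i <;> simp [hgoal]
  refine ⟨RCG.indepObjectives_of_goal_eq_singleton hr hg, fun pref P hNE => ?_⟩
  have hP : ∀ j, P j = 0 ∨ P j = G.endow j := by
    intro j
    have hle := hNE.1 j
    fin_cases j <;> simpa [hendow] using hle
  have contributes_iff (i : Fin 3) :=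
    hNE.ne_zero_iff_not_mem_sum_out_update_zero hr hg (i := i) (by fin_cases i <;> simp [hendow])
  have h0 : P 0 ≠ 0 ↔ P 2 = 0 := by
    rw [contributes_iff 0]
    rcases hP 1 with h1 | h1 <;> rcases hP 2 with h2 | h2 <;>
      simp [RCG.out, Fin.sum_univ_three, h1, h2, hendow, hAB, hAC]
  have h1 : P 1 ≠ 0 ↔ P 0 = 0 := by
    rw [contributes_iff 1]
    rcases hP 0 with h0 | h0 <;> rcases hP 2 with h2 | h2 <;>
      simp [RCG.out, Fin.sum_univ_three, h0, h2, hendow, hAB.symm, hBC]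
  have h2 : P 2 ≠ 0 ↔ P 1 = 0 := by
    rw [contributes_iff 2]
    rcases hP 0 with h0 | h0 <;> rcases hP 1 with h1 | h1 <;>
      simp [RCG.out, Fin.sum_univ_three, h0, h1, hendow, hAC.symm, hBC.symm]
  tauto
end

section
/- Some RCGBARs admit no pure Nash equilibrium under contention-tolerant preferences. Concretely, for an atomic resource A, the two-player RCGBAR with γ_1 = A, γ_2 = A·A, ε_1 = {A}, ε_2 = {A} satisfies NE^ct(G) = ∅. -/
open scoped Classical

/-! Player 1 contributes only if satisfied, i.e. only if player 0 contributes too; but then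
player 0 free-rides by withdrawing. So player 1 does not contribute, and then either player 0
gains by contributing or, if player 0 already does, player 1 gains by contributing. -/

theorem Multiset.cons_ne_self {α : Type*} (a : α) (s : Multiset α) : a ::ₘ s ≠ s :=
  fun h => by simpa using congrArg Multiset.card h

namespace RCG

variable {Res ι : Type*} [Fintype ι] {pref : Pref} {G : RCG Res ι} {P Q : Profile Res ι}
  {i : ι} {C : Multiset (Multiset Res)}

theorem prefers_of_good_of_not_good (hP : Good pref G P i) (hQ : ¬ Good pref G Q i) :
    Prefers pref G i Q P :=
  Or.inr (Or.inl ⟨hP, hQ⟩)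

theorem prefers_of_lt_of_good_imp (hlt : P i < Q i) (hgood : Good pref G Q i → Good pref G P i) :
    Prefers pref G i Q P := by
  by_cases hQ : Good pref G Q i
  · exact Or.inr (Or.inr ⟨hgood hQ, hQ, hlt⟩)
  by_cases hP : Good pref G P i
  · exact prefers_of_good_of_not_good hP hQ
  · exact Or.inl ⟨hP, hQ, hlt⟩

theorem NE.good_of_good_update (hP : NE pref G P) (hC : C ≤ G.endow i)
    (hgood : Good pref G (Function.update P i C) i) : Good pref G P i := by
  by_contra hbad
  exact hP.2 i C ⟨hC, prefers_of_good_of_not_good hgood hbad⟩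

theorem NE.good_and_not_good_update_of_lt (hP : NE pref G P) (hC : C < P i) :
    Good pref G P i ∧ ¬ Good pref G (Function.update P i C) i := by
  by_contra hneed
  refine hP.2 i C ⟨hC.le.trans (hP.1 i), prefers_of_lt_of_good_imp (by simpa using hC) ?_⟩
  intro hgood
  by_contra hbad
  exact hneed ⟨hgood, hbad⟩

theorem good_ct_iff_of_fin_two {G : RCG Res (Fin 2)} {P : Profile Res (Fin 2)} {i : Fin 2} :
    Good .ct G P i ↔ G.goal i ≤ (P 0 + P 1).sum := by
  rw [Good, Psat, Trans, out, Fin.sum_univ_two]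

end RCG

/-- the two-player RCGBAR with `γ₁ = A`, `γ₂ = A·A`, `ε₁ = ε₂ = {A}`
has no pure Nash equilibrium under contention-tolerant preferences. -/
theorem RCGBAR_no_NE_ct {Res : Type*} (A : Res)
    (G : RCG Res (Fin 2))
    (hgoal : G.goal = ![({A} : Multiset Res), ({A, A} : Multiset Res)])
    (hendow : G.endow = ![({({A} : Multiset Res)} : Multiset (Multiset Res)),
                          ({({A} : Multiset Res)} : Multiset (Multiset Res))]) :
    ∀ P : RCG.Profile Res (Fin 2), ¬ RCG.NE .ct G P := by
  intro P hP
  have hendow_i : ∀ i, G.endow i = {{A}} := by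
    intro i; fin_cases i <;> simp [hendow]
  have hcontrib : ∀ i, P i = 0 ∨ P i = {{A}} := fun i =>
    Multiset.le_singleton.mp (hendow_i i ▸ hP.1 i)
  have hP1 : P 1 = 0 := by
    refine (hcontrib 1).resolve_right fun h1 => ?_
    have hsat1 := (hP.good_and_not_good_update_of_lt (i := 1) (C := 0) (by simp [h1])).1
    have h0 : P 0 = {{A}} := (hcontrib 0).resolve_left fun h0 => by
      simp [RCG.good_ct_iff_of_fin_two, hgoal, h0, h1, Multiset.cons_ne_self] at hsat1
    apply (hP.good_and_not_good_update_of_lt (i := 0) (C := 0) (by simp [h0])).2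
    simp [RCG.good_ct_iff_of_fin_two, hgoal, h1]
  rcases hcontrib 0 with h0 | h0
  · have hsat0 := hP.good_of_good_update (i := 0) (C := {{A}}) (hendow_i 0).ge
      (by simp [RCG.good_ct_iff_of_fin_two, hgoal, hP1])
    simp [RCG.good_ct_iff_of_fin_two, hgoal, h0, hP1] at hsat0
  · have hsat1 := hP.good_of_good_update (i := 1) (C := {{A}}) (hendow_i 1).ge
      (by simp [RCG.good_ct_iff_of_fin_two, hgoal, h0])
    simp [RCG.good_ct_iff_of_fin_two, hgoal, h0, hP1, Multiset.cons_ne_self] at hsat1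
end

section
/- For every RCGBAR G and every kind of preferences pref ∈ {ct, ca, pca}, the set of pure Nash equilibria of G with respect to the multiset-inclusion-based preference ≺^pref equals the set of pure Nash equilibria with respect to the cardinality-based preference ≺'^pref. -/
open scoped Classical

namespace RCG

variable {Res ι : Type*} [Fintype ι]

/-- Cardinality-based strict preference: `Q ≺'^pref_i P`. -/
def PrefersCard (pref : Pref) (G : RCG Res ι) (i : ι) (Q P : Profile Res ι) : Prop :=
  (¬ Good pref G P i ∧ ¬ Good pref G Q i ∧
    Multiset.card (P i) < Multiset.card (Q i)) ∨
  (Good pref G P i ∧ ¬ Good pref G Q i) ∨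
  (Good pref G P i ∧ Good pref G Q i ∧
    Multiset.card (P i) < Multiset.card (Q i))

/-- Profitable deviation with respect to the cardinality-based preference. -/
noncomputable def ProfDevCard (pref : Pref) (G : RCG Res ι) (P : Profile Res ι)
    (i : ι) (C : Multiset (Multiset Res)) : Prop :=
  C ≤ G.endow i ∧ PrefersCard pref G i P (Function.update P i C)

/-- Pure Nash equilibrium with respect to the cardinality-based preference. -/
noncomputable def NECard (pref : Pref) (G : RCG Res ι) (P : Profile Res ι) : Prop :=
  (∀ i, P i ≤ G.endow i) ∧ ∀ i C, ¬ ProfDevCard pref G P i C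

end RCG

/-
In an RCGBAR every choice is a bag of singleton bundles, so it is determined by its flattening
`♭•(C)` and has the same cardinality. Whether a profile is good for player `i` depends only on
the flattened outcome, and the set of flattened outcomes good for `i` is closed under `∩`, since
the satisfied players only shrink as the outcome does. Hence if `C` is a good deviation with
`|C| < |P i|` from a good profile `P`, so is the sub-bag of `P i` with flattening
`♭•(C) ∩ ♭•(P i)`, which is strictly smaller than `P i`: a profitable deviation for `≺`.
A profile that is not good for `i` can only be an equilibrium when `P i = 0`, for either
way dropping one bundle is profitable. Conversely `P i ⊊ Q i` implies `|P i| < |Q i|`.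
-/

namespace RCG

variable {Res ι : Type*} [Fintype ι]

section Flat

variable (G : RCG Res ι)

noncomputable def satisfiedBy (F : Multiset Res) : Finset ι :=
  Finset.univ.filter fun j => G.goal j ≤ F

/-- Goodness of a profile for player `i` as a predicate on its flattened outcome `♭•(out P)`. -/
def GoodAt (pref : Pref) (i : ι) (F : Multiset Res) : Prop :=
  match pref with
  | .ct => G.goal i ≤ F
  | .ca => G.goal i ≤ F ∧ ∑ j ∈ G.satisfiedBy F, G.goal j ≤ F
  | .pca => G.goal i ≤ F ∧ ∑ j ∈ G.satisfiedBy F, restr (G.goal j) (G.goal i) ≤ F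

variable {G}

theorem satisfiedBy_mono {F F' : Multiset Res} (h : F ≤ F') :
    G.satisfiedBy F ⊆ G.satisfiedBy F' :=
  Finset.monotone_filter_right _ fun _ _ hj => hj.trans h

theorem sum_satisfiedBy_le_inter (f : ι → Multiset Res) {F₁ F₂ : Multiset Res}
    (h₁ : ∑ j ∈ G.satisfiedBy F₁, f j ≤ F₁)
    (h₂ : ∑ j ∈ G.satisfiedBy F₂, f j ≤ F₂) :
    ∑ j ∈ G.satisfiedBy (F₁ ∩ F₂), f j ≤ F₁ ∩ F₂ :=
  Multiset.le_inter
    ((Finset.sum_le_sum_of_subset (satisfiedBy_mono Multiset.inter_le_left)).trans h₁)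
    ((Finset.sum_le_sum_of_subset (satisfiedBy_mono Multiset.inter_le_right)).trans h₂)

theorem GoodAt.inter {pref : Pref} {i : ι} {F₁ F₂ : Multiset Res} (h₁ : G.GoodAt pref i F₁)
    (h₂ : G.GoodAt pref i F₂) : G.GoodAt pref i (F₁ ∩ F₂) := by
  cases pref with
  | ct => exact Multiset.le_inter h₁ h₂
  | ca => exact ⟨Multiset.le_inter h₁.1 h₂.1, sum_satisfiedBy_le_inter _ h₁.2 h₂.2⟩
  | pca => exact ⟨Multiset.le_inter h₁.1 h₂.1, sum_satisfiedBy_le_inter _ h₁.2 h₂.2⟩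

theorem good_iff_goodAt (pref : Pref) (P : Profile Res ι) (i : ι) :
    Good pref G P i ↔ G.GoodAt pref i (out P).sum := by
  have hsat : psatPlayers G P = G.satisfiedBy (out P).sum := by
    unfold psatPlayers satisfiedBy
    congr
  cases pref with
  | ct => rfl
  | ca => simp only [Good, GoodAt, Contentious, Psat, Trans, hsat, not_not]
  | pca =>
    simp only [Good, GoodAt, ContentiousFor, Psat, Trans, hsat, not_and, not_not]
    exact and_congr_right fun h => ⟨fun h' => h' h, fun h' _ => h'⟩

theorem sum_out_update (P : Profile Res ι) (i : ι) (X : Multiset (Multiset Res)) :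
    (out (Function.update P i X)).sum = X.sum + (∑ j ∈ Finset.univ.erase i, P j).sum := by
  rw [out, Finset.sum_update_of_mem (Finset.mem_univ i), Multiset.sum_add, Finset.erase_eq]

end Flat

theorem eq_map_singleton_sum {X : Multiset (Multiset Res)} (h : ∀ B ∈ X, ∃ r : Res, B = {r}) :
    X = X.sum.map ({·}) := by
  induction X using Multiset.induction_on with
  | empty => simp
  | cons B X ih =>
    obtain ⟨r, rfl⟩ := h B (Multiset.mem_cons_self _ _)
    rw [Multiset.sum_cons, Multiset.map_add, ← ih fun B hB => h B (Multiset.mem_cons_of_mem hB)]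
    simp

variable {G : RCG Res ι} {pref : Pref} {P : Profile Res ι} {i : ι}

theorem good_update_map_singleton_inter {c : Multiset Res}
    (hc : Good pref G (Function.update P i (c.map ({·}))) i) (hP : Good pref G P i) :
    Good pref G (Function.update P i ((c ∩ (P i).sum).map ({·}))) i := by
  rw [← Function.update_eq_self i P, good_iff_goodAt, sum_out_update] at hP
  rw [good_iff_goodAt, sum_out_update] at hc ⊢
  rw [Multiset.sum_map_singleton] at hc ⊢
  rw [Multiset.inter_add_distrib]
  exact hc.inter hP

theorem exists_profDev_of_not_good (hP : P i ≤ G.endow i) (hgood : ¬ Good pref G P i)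
    (hne : P i ≠ 0) : ∃ C, ProfDev pref G P i C := by
  obtain ⟨x, hx⟩ := Multiset.exists_mem_of_ne_zero hne
  refine ⟨(P i).erase x, (Multiset.erase_le x _).trans hP, ?_⟩
  by_cases hD : Good pref G (Function.update P i ((P i).erase x)) i
  · exact Or.inr (Or.inl ⟨hD, hgood⟩)
  · exact Or.inl ⟨hD, hgood, by simpa using Multiset.erase_lt.2 hx⟩

theorem exists_profDev_of_good_of_card_lt (hbar : IsRCGBAR G) (hP : P i ≤ G.endow i)
    {C : Multiset (Multiset Res)} (hC : C ≤ G.endow i)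
    (hgoodC : Good pref G (Function.update P i C) i) (hgoodP : Good pref G P i)
    (hcard : Multiset.card C < Multiset.card (P i)) : ∃ C', ProfDev pref G P i C' := by
  have hCrepr := eq_map_singleton_sum fun B hB => hbar i B (Multiset.mem_of_le hC hB)
  have hPrepr := eq_map_singleton_sum fun B hB => hbar i B (Multiset.mem_of_le hP hB)
  set D : Multiset (Multiset Res) := (C.sum ∩ (P i).sum).map ({·})
  have hDle : D ≤ P i := by
    rw [hPrepr]
    exact Multiset.map_le_map Multiset.inter_le_right
  have hDcard : Multiset.card D < Multiset.card (P i) := calc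
    Multiset.card D = Multiset.card (C.sum ∩ (P i).sum) := Multiset.card_map _ _
    _ ≤ Multiset.card C.sum := Multiset.card_le_card Multiset.inter_le_left
    _ = Multiset.card C := by conv_rhs => rw [hCrepr, Multiset.card_map]
    _ < Multiset.card (P i) := hcard
  rw [hCrepr] at hgoodC
  have hDlt : D < P i := lt_of_le_of_ne hDle (ne_of_apply_ne _ hDcard.ne)
  have hgoodD := good_update_map_singleton_inter hgoodC hgoodP
  exact ⟨D, hDle.trans hP, Or.inr (Or.inr ⟨hgoodD, hgoodP, by simpa using hDlt⟩)⟩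

theorem ProfDevCard.exists_profDev (hbar : IsRCGBAR G) (hP : ∀ j, P j ≤ G.endow j)
    {C : Multiset (Multiset Res)} (hdev : ProfDevCard pref G P i C) :
    ∃ C', ProfDev pref G P i C' := by
  obtain ⟨hC, hpref⟩ := hdev
  simp only [PrefersCard, Function.update_self] at hpref
  rcases hpref with ⟨-, hgoodP, hcard⟩ | ⟨hgoodC, hgoodP⟩ | ⟨hgoodC, hgoodP, hcard⟩
  · exact exists_profDev_of_not_good (hP i) hgoodP (Multiset.card_pos.1 (by omega))
  · exact ⟨C, hC, Or.inr (Or.inl ⟨hgoodC, hgoodP⟩)⟩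
  · exact exists_profDev_of_good_of_card_lt hbar (hP i) hC hgoodC hgoodP hcard

theorem ProfDev.profDevCard {C : Multiset (Multiset Res)} (hdev : ProfDev pref G P i C) :
    ProfDevCard pref G P i C := by
  obtain ⟨hC, hpref⟩ := hdev
  refine ⟨hC, ?_⟩
  rcases hpref with ⟨h₁, h₂, hlt⟩ | hgood | ⟨h₁, h₂, hlt⟩
  · exact Or.inl ⟨h₁, h₂, Multiset.card_lt_card hlt⟩
  · exact Or.inr (Or.inl hgood)
  · exact Or.inr (Or.inr ⟨h₁, h₂, Multiset.card_lt_card hlt⟩)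

end RCG

/-- in every RCGBAR, for every kind of preferences, the Nash equilibria
with respect to the multiset-inclusion-based preference coincide with those for the
cardinality-based preference. -/
theorem RCGBAR_NE_eq_NECard {Res ι : Type*} [Fintype ι]
    (G : RCG Res ι) (hbar : RCG.IsRCGBAR G) (pref : RCG.Pref) :
    ∀ P : RCG.Profile Res ι, RCG.NE pref G P ↔ RCG.NECard pref G P := by
  intro P
  constructor
  · rintro ⟨hP, hND⟩
    refine ⟨hP, fun i C hdev => ?_⟩
    obtain ⟨C', hC'⟩ := hdev.exists_profDev hbar hP
    exact hND i C' hC'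
  · rintro ⟨hP, hND⟩
    exact ⟨hP, fun i C hdev => hND i C hdev.profDevCard⟩
end
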